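/- arXiv:1905.01130 — 2 statements merged into one kernel-verified Lean document; each statement's English description precedes it below -/
import Mathlib

section
/- Let [X,d,m] be a metric random walk space with an invariant and reversible probability measure ν which is ergodic, and suppose m_x ≪ ν for all x ∈ X. (i) Suppose hypothesis (H1) holds: for every ν-null set B ⊂ X there exist points x_1,…,x_N ∈ X∖B, ν-measurable sets Ω_1,…,Ω_N ⊂ X with X = ⋃_{i=1}^N Ω_i, and α > 0 such that dm_{x_i}/dν ≥ α ν-a.e. on Ω_i for i = 1,…,N. Then for every p ≥ 1 there exists c > 0 such that ‖u‖_{L^p(X,ν)} ≤ c · ( (∫_X ∫_X |u(y) − u(x)|^p dm_x(y) dν(x))^{1/p} + |∫_X u dν| ) for all u ∈ L^p(X,ν). (ii) Let 1 ≤ p < q and suppose hypothesis (H2) holds: for every ν-null set B ⊂ X there exist points x_1,…,x_N ∈ X∖B and ν-measurable sets Ω_1,…,Ω_N ⊂ X with X = ⋃_{i=1}^N Ω_i such that, with g_i := dm_{x_i}/dν on Ω_i, the function g_i^{−p/(q−p)} belongs to L¹(Ω_i,ν) for i = 1,…,N. Then there exists c > 0 such that ‖u‖_{L^p(X,ν)}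 ≤ c · ( (∫_X ∫_X |u(y) − u(x)|^q dm_x(y) dν(x))^{1/q} + |∫_X u dν| ) for all u ∈ L^q(X,ν). -/
open MeasureTheory ENNReal Filter Set Topology

noncomputable section

variable {X : Type*} [MeasurableSpace X]

/-- The double integral `∫∫ |u(y) − u(x)| dm_x(y) dν(x)`. -/
def nlEnergy (m : X → Measure X) (ν : Measure X) (u : X → ℝ) : ℝ≥0∞ :=
  ∫⁻ x, ∫⁻ y, ENNReal.ofReal |u y - u x| ∂(m x) ∂ν

/-- The `m`-total variation `TV_m(u) = (1/2) ∫∫ |u(y) − u(x)| dm_x(y) dν(x)`. -/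
def TVm (m : X → Measure X) (ν : Measure X) (u : X → ℝ) : ℝ≥0∞ :=
  2⁻¹ * nlEnergy m ν u

/-- `u ∈ BV_m(X,ν)`: a measurable function with finite nonlocal energy. -/
def MemBVm (m : X → Measure X) (ν : Measure X) (u : X → ℝ) : Prop :=
  Measurable u ∧ nlEnergy m ν u < ⊤

/-- `u ∈ BV_m^0(X,ν)`: `u ∈ BV_m(X,ν)` vanishing a.e. outside a set `A` with `0 < ν A < ν X`. -/
def MemBVm0 (m : X → Measure X) (ν : Measure X) (u : X → ℝ) : Prop :=
  MemBVm m ν u ∧ ∃ A : Set X, MeasurableSet A ∧ 0 < ν A ∧ ν A < ν Set.univ ∧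
    ∀ᵐ x ∂ν, x ∉ A → u x = 0

/-- The `m`-interaction `L_m(A,B) = ∫_A m_x(B) dν(x)`. -/
def Lm (m : X → Measure X) (ν : Measure X) (A B : Set X) : ℝ≥0∞ :=
  ∫⁻ x in A, m x B ∂ν

/-- The `m`-perimeter `P_m(E) = L_m(E, X∖E)`. -/
def Pm (m : X → Measure X) (ν : Measure X) (E : Set X) : ℝ≥0∞ :=
  Lm m ν E Eᶜ

/-- `ν` is invariant and reversible for `m`. -/
def Reversible (m : X → Measure X) (ν : Measure X) : Prop :=
  ∀ F : X → X → ℝ≥0∞, Measurable (Function.uncurry F) →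
    ∫⁻ x, ∫⁻ y, F x y ∂(m x) ∂ν = ∫⁻ y, ∫⁻ x, F x y ∂(m y) ∂ν

/-- `x ↦ m_x(A)` is measurable for every Borel set `A`. -/
def MeasurableKernel (m : X → Measure X) : Prop :=
  ∀ A : Set X, MeasurableSet A → Measurable fun x => m x A

/-- The measure `ν ⊗ m_x` on `X × X`, given by `(ν ⊗ m_x)(U) = ∫ m_x(U_x) dν(x)`. -/
def nuOtimes (m : X → Measure X) (ν : Measure X) : Measure (X × X) :=
  ν.bind fun x => (m x).map (Prod.mk x)

/-- The `m`-divergence `div_m z (x) = (1/2) ∫ (z(x,y) − z(y,x)) dm_x(y)`. -/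
def divm (m : X → Measure X) (z : X → X → ℝ) (x : X) : ℝ :=
  2⁻¹ * ∫ y, (z x y - z y x) ∂(m x)

/-- The multivalued sign function. -/
def signSet (r : ℝ) : Set ℝ :=
  if 0 < r then {1} else if r < 0 then {-1} else Set.Icc (-1) 1

/-- `[X,d,m]` is `m`-connected with respect to `ν`. -/
def MConnected (m : X → Measure X) (ν : Measure X) : Prop :=
  ∀ A B : Set X, MeasurableSet A → MeasurableSet B → 0 < ν A → 0 < ν B →
    A ∪ B = Set.univ → 0 < Lm m ν A B

/-- `ν` is ergodic for `m`. -/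
def ErgodicRW (m : X → Measure X) (ν : Measure X) : Prop :=
  ∀ B : Set X, MeasurableSet B → (∀ x ∈ B, m x B = 1) → ν B = 0 ∨ ν B = 1

/-- `v ∈ ∂F_m(u)`, where `F_m(w) = TV_m(w)` for `w ∈ L² ∩ BV_m` and `+∞` otherwise.
This unfolds the subdifferential inequality: it forces `F_m(u) < ∞` and the inequality
is trivial for test functions `w` with `F_m(w) = ∞`. -/
def subdiffFm (m : X → Measure X) (ν : Measure X) (u v : X → ℝ) : Prop :=
  MemLp u 2 ν ∧ MemLp v 2 ν ∧ MemBVm m ν u ∧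
    ∀ w : X → ℝ, MemLp w 2 ν → MemBVm m ν w →
      (TVm m ν u).toReal + ∫ x, v x * (w x - u x) ∂ν ≤ (TVm m ν w).toReal

/-- `(λ, u)` is an `m`-eigenpair of the 1-Laplacian. -/
def IsEigenpair (m : X → Measure X) (ν : Measure X) (lam : ℝ) (u : X → ℝ) : Prop :=
  eLpNorm u 1 ν = 1 ∧
    ∃ ξ : X → ℝ, MemLp ξ ⊤ ν ∧ (∀ᵐ x ∂ν, ξ x ∈ signSet (u x)) ∧
      subdiffFm m ν u fun x => lam * ξ x

/-- The `m`-Cheeger constant of a set `Ω`. -/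
def h1m (m : X → Measure X) (ν : Measure X) (Ω : Set X) : ℝ≥0∞ :=
  sInf {r : ℝ≥0∞ | ∃ E : Set X, MeasurableSet E ∧ E ⊆ Ω ∧ 0 < ν E ∧ r = Pm m ν E / ν E}

/-- `Ω` is `m`-calibrable. -/
def Calibrable (m : X → Measure X) (ν : Measure X) (Ω : Set X) : Prop :=
  h1m m ν Ω = Pm m ν Ω / ν Ω

/-- The `m`-Cheeger constant of the whole space (for a probability measure `ν`). -/
def cheegerConst (m : X → Measure X) (ν : Measure X) : ℝ≥0∞ :=
  sInf {r : ℝ≥0∞ | ∃ D : Set X, MeasurableSet D ∧ 0 < ν D ∧ ν D < 1 ∧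
    r = Pm m ν D / min (ν D) (ν Dᶜ)}

/-- The Dirichlet energy functional `H_m(u) = (1/2) ∫∫ (u(x) − u(y))² dm_x(y) dν(x)`. -/
def Hm (m : X → Measure X) (ν : Measure X) (u : X → ℝ) : ℝ≥0∞ :=
  2⁻¹ * ∫⁻ x, ∫⁻ y, ENNReal.ofReal ((u x - u y) ^ 2) ∂(m x) ∂ν

end

/-!
Argue by compactness. If no constant works, normalising counterexamples for the constants `2 ^ n`
gives functions `v n` with `‖v n‖_p = 1`, summable `q`-energies and means tending to `0`. Feed
to (H1) or (H2) the null set where the pointwise energies `∫ |v n y - v n x| ^ q dm_x(y)` are not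
summable: at the base points `x_i` they tend to `0`, and the lower bound on `dm_{x_i}/dν`
(directly, or through Hölder's inequality) makes `v n` close in `L^p(Ω_i)` to the constant
`v n (x_i)`. These constants are bounded, so a subsequence converges in `L^p` to a step function.
By Fatou the limit has zero energy, so by ergodicity it is constant, hence equal to its mean `0`,
contradicting `‖v n‖_p = 1`.
-/

open ProbabilityTheory

section DensityEstimates

variable {X : Type*} [MeasurableSpace X] {μ ν : Measure X}

lemma mul_setLIntegral_le_lintegral_of_le_rnDeriv [μ.HaveLebesgueDecomposition ν] (hμν : μ ≪ ν)
    {Ω : Set X} (hΩ : MeasurableSet Ω) {c : ℝ≥0∞} (hc : ∀ᵐ x ∂ν, x ∈ Ω → c ≤ μ.rnDeriv ν x)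
    {f : X → ℝ≥0∞} (hf : Measurable f) :
    c * ∫⁻ x in Ω, f x ∂ν ≤ ∫⁻ x, f x ∂μ := by
  rw [← lintegral_const_mul c hf, ← lintegral_rnDeriv_mul hμν hf.aemeasurable]
  calc ∫⁻ x in Ω, c * f x ∂ν ≤ ∫⁻ x in Ω, μ.rnDeriv ν x * f x ∂ν :=
        lintegral_mono_ae <| (ae_restrict_iff' hΩ).2 <| hc.mono fun x hx hxΩ =>
          mul_le_mul_left (hx hxΩ) _
    _ ≤ ∫⁻ x, μ.rnDeriv ν x * f x ∂ν := setLIntegral_le_lintegral _ _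

/-- Hölder's inequality with exponents `q / p` and `q / (q - p)` applied to
`f ^ p = (f ^ p * g ^ (p / q)) * g ^ (-(p / q))`, where `g = dμ/dν`. -/
lemma setLIntegral_rpow_le_lintegral_rpow_mul_rnDeriv [SigmaFinite μ] [SigmaFinite ν]
    (hμν : μ ≪ ν) {Ω : Set X} (hΩ : MeasurableSet Ω) {p q : ℝ} (hp : 0 < p) (hpq : p < q)
    (h0 : ∀ᵐ x ∂ν, x ∈ Ω → μ.rnDeriv ν x ≠ 0) {f : X → ℝ≥0∞} (hf : Measurable f) :
    ∫⁻ x in Ω, f x ^ p ∂ν ≤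
      (∫⁻ x, f x ^ q ∂μ) ^ (p / q) *
        (∫⁻ x in Ω, μ.rnDeriv ν x ^ (-(p / (q - p))) ∂ν) ^ ((q - p) / q) := by
  set g := μ.rnDeriv ν
  have hg : Measurable g := μ.measurable_rnDeriv ν
  have hq : 0 < q := hp.trans hpq
  have hconj : Real.HolderConjugate (q / p) (q / (q - p)) := by
    rw [Real.holderConjugate_iff]
    refine ⟨by rw [lt_div_iff₀ hp]; linarith, ?_⟩
    rw [inv_div, inv_div, ← add_div, add_sub_cancel, div_self hq.ne']
  have hsplit : ∀ᵐ x ∂ν.restrict Ω, f x ^ p = f x ^ p * g x ^ (p / q) * g x ^ (-(p / q)) := by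
    refine (ae_restrict_iff' hΩ).2 ?_
    filter_upwards [h0, μ.rnDeriv_lt_top ν] with x hx hxt hxΩ
    rw [mul_assoc, ← ENNReal.rpow_add _ _ (hx hxΩ) hxt.ne, add_neg_cancel, ENNReal.rpow_zero,
      mul_one]
  have hfirst (x : X) : (f x ^ p * g x ^ (p / q)) ^ (q / p) = f x ^ q * g x := by
    rw [ENNReal.mul_rpow_of_nonneg _ _ (by positivity), ← ENNReal.rpow_mul, ← ENNReal.rpow_mul,
      mul_div_cancel₀ _ hp.ne', show p / q * (q / p) = 1 by field_simp, ENNReal.rpow_one]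
  have hsecond (x : X) : (g x ^ (-(p / q))) ^ (q / (q - p)) = g x ^ (-(p / (q - p))) := by
    rw [← ENNReal.rpow_mul, neg_mul, div_mul_div_cancel₀ hq.ne']
  calc ∫⁻ x in Ω, f x ^ p ∂ν
      = ∫⁻ x in Ω, f x ^ p * g x ^ (p / q) * g x ^ (-(p / q)) ∂ν := lintegral_congr_ae hsplit
    _ ≤ (∫⁻ x in Ω, (f x ^ p * g x ^ (p / q)) ^ (q / p) ∂ν) ^ (1 / (q / p)) *
        (∫⁻ x in Ω, (g x ^ (-(p / q))) ^ (q / (q - p)) ∂ν) ^ (1 / (q / (q - p))) :=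
      ENNReal.lintegral_mul_le_Lp_mul_Lq _ hconj
        ((hf.pow_const p).mul (hg.pow_const _)).aemeasurable (hg.pow_const _).aemeasurable
    _ = (∫⁻ x in Ω, g x * f x ^ q ∂ν) ^ (p / q) *
        (∫⁻ x in Ω, g x ^ (-(p / (q - p))) ∂ν) ^ ((q - p) / q) := by
      simp only [hfirst, hsecond, one_div_div, mul_comm (f _ ^ q)]
    _ ≤ (∫⁻ x, g x * f x ^ q ∂ν) ^ (p / q) *
        (∫⁻ x in Ω, g x ^ (-(p / (q - p))) ∂ν) ^ ((q - p) / q) := by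
      gcongr
      exact Measure.restrict_le_self
    _ = _ := by rw [lintegral_rnDeriv_mul hμν (hf.pow_const q).aemeasurable]

end DensityEstimates

lemma exists_subseq_tendsto_of_eventually_abs_le {ι : Type*} [Fintype ι] {a : ℕ → ι → ℝ}
    {S : Set ι} (h : ∀ i ∈ S, ∃ R, ∀ᶠ k in atTop, |a k i| ≤ R) :
    ∃ (φ : ℕ → ℕ) (L : ι → ℝ), StrictMono φ ∧
      ∀ i ∈ S, Tendsto (fun k => a (φ k) i) atTop (𝓝 (L i)) := by
  classical
  have hb (i : ι) : ∃ R, ∀ᶠ k in atTop, |S.indicator (a k) i| ≤ R := by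
    by_cases hi : i ∈ S
    · simpa [indicator_of_mem hi] using h i hi
    · exact ⟨0, by simp [indicator_of_notMem hi]⟩
  choose R hR using hb
  have hbdd : Bornology.IsBounded (pi univ fun i => Icc (-R i) (R i)) :=
    Bornology.IsBounded.pi fun i => Metric.isBounded_Icc _ _
  obtain ⟨L, -, φ, hφ, hlim⟩ := tendsto_subseq_of_frequently_bounded hbdd
    (x := fun k => S.indicator (a k)) <| (eventually_all.2 hR).frequently.mono fun k hk =>
      fun i _ => abs_le.1 (hk i)
  refine ⟨φ, L, hφ, fun i hi => ?_⟩
  simpa [Function.comp_def, indicator_of_mem hi] using tendsto_pi_nhds.1 hlim i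

lemma eLpNorm_ofReal_eq_lintegral_enorm_rpow {X : Type*} [MeasurableSpace X] (μ : Measure X)
    {p : ℝ} (hp : 0 < p) (f : X → ℝ) :
    eLpNorm f (ENNReal.ofReal p) μ = (∫⁻ x, ‖f x‖ₑ ^ p ∂μ) ^ (1 / p) := by
  rw [eLpNorm_eq_lintegral_rpow_enorm_toReal (by simpa using hp) ENNReal.ofReal_ne_top,
    ENNReal.toReal_ofReal hp.le]

section LpConvergence

variable {X : Type*} [MeasurableSpace X] {μ : Measure X} {p : ℝ≥0∞}

lemma tendsto_integral_of_tendsto_eLpNorm [IsProbabilityMeasure μ] (hp : 1 ≤ p)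
    {f : ℕ → X → ℝ} {g : X → ℝ} (hf : ∀ k, MemLp (f k) p μ) (hg : AEStronglyMeasurable g μ)
    (hlim : Tendsto (fun k => eLpNorm (f k - g) p μ) atTop (𝓝 0)) :
    Tendsto (fun k => ∫ x, f k x ∂μ) atTop (𝓝 (∫ x, g x ∂μ)) := by
  refine tendsto_integral_of_L1' g hg (.of_forall fun k => (hf k).integrable hp) ?_
  exact tendsto_of_tendsto_of_tendsto_of_le_of_le tendsto_const_nhds hlim (fun _ => bot_le)
    fun k => eLpNorm_le_eLpNorm_of_exponent_le hp ((hf k).1.sub hg)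

lemma eLpNorm_const_sub_le (hp : 1 ≤ p) {f : X → ℝ} (hf : Measurable f) (a : ℝ) :
    eLpNorm (fun _ => a) p μ ≤ eLpNorm f p μ + eLpNorm (fun x => f x - a) p μ := by
  have h := eLpNorm_sub_le (μ := μ) (f := f) (g := fun x => f x - a) hf.aestronglyMeasurable
    (hf.sub_const a).aestronglyMeasurable hp
  rwa [show f - (fun x => f x - a) = fun _ => a by ext; simp] at h

lemma exists_eventually_abs_le_of_tendsto_eLpNorm_sub [IsFiniteMeasure μ] (hμ : μ ≠ 0)
    (hp : 1 ≤ p) (hp' : p ≠ ⊤) {f : ℕ → X → ℝ} (hf : ∀ k, Measurable (f k)) {C : ℝ≥0∞}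
    (hC : C ≠ ⊤) (hbdd : ∀ k, eLpNorm (f k) p μ ≤ C) {a : ℕ → ℝ}
    (ha : Tendsto (fun k => eLpNorm (fun x => f k x - a k) p μ) atTop (𝓝 0)) :
    ∃ R, ∀ᶠ k in atTop, |a k| ≤ R := by
  set s := μ univ ^ (1 / p.toReal)
  have hp0 : p ≠ 0 := (zero_lt_one.trans_le hp).ne'
  have hs0 : s ≠ 0 := by simp [s, ENNReal.rpow_eq_zero_iff, hμ, ENNReal.toReal_pos hp0 hp']
  have hs : s ≠ ⊤ := ENNReal.rpow_ne_top_of_nonneg (by positivity) (measure_ne_top μ _)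
  refine ⟨((C + 1) / s).toReal, (ha.eventually_le_const zero_lt_one).mono fun k hk => ?_⟩
  have hmul : ‖a k‖ₑ * s ≤ C + 1 := by
    rw [← eLpNorm_const' _ hp0 hp']
    exact (eLpNorm_const_sub_le hp (hf k) (a k)).trans (add_le_add (hbdd k) hk)
  rw [← Real.norm_eq_abs, ← toReal_enorm]
  exact ENNReal.toReal_mono (ENNReal.div_ne_top (by simp [hC]) hs0)
    ((ENNReal.le_div_iff_mul_le (.inl hs0) (.inl hs)).2 hmul)

lemma tendsto_eLpNorm_sub_const [IsFiniteMeasure μ] (hp : 1 ≤ p) (hp' : p ≠ ⊤) {f : ℕ → X → ℝ}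
    (hf : ∀ k, Measurable (f k)) {a : ℕ → ℝ} {L : ℝ}
    (ha : Tendsto (fun k => eLpNorm (fun x => f k x - a k) p μ) atTop (𝓝 0))
    (haL : Tendsto a atTop (𝓝 L)) :
    Tendsto (fun k => eLpNorm (fun x => f k x - L) p μ) atTop (𝓝 0) := by
  have hp0 : p ≠ 0 := (zero_lt_one.trans_le hp).ne'
  have hconst : Tendsto (fun k => eLpNorm (fun _ => a k - L) p μ) atTop (𝓝 0) := by
    simp_rw [eLpNorm_const' _ hp0 hp']
    have h := ((continuous_enorm.comp (continuous_sub_right L)).tendsto L).comp haL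
    simpa using ENNReal.Tendsto.mul_const h
      (.inr (ENNReal.rpow_ne_top_of_nonneg (by positivity) (measure_ne_top μ _)))
  refine tendsto_of_tendsto_of_tendsto_of_le_of_le tendsto_const_nhds
    (by simpa using ha.add hconst) (fun _ => bot_le) fun k => ?_
  have h := eLpNorm_add_le (μ := μ) (f := fun x => f k x - a k) (g := fun _ => a k - L)
    ((hf k).sub_const _).aestronglyMeasurable aestronglyMeasurable_const hp
  rwa [show ((fun x => f k x - a k) + fun _ => a k - L) = fun x => f k x - L by ext; simp] at h
lemma exists_finite_range_tendsto_eLpNorm_sub (hp : 1 ≤ p) {N : ℕ} {Ω : Fin N → Set X}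
    (hΩ : ∀ i, MeasurableSet (Ω i)) (hcover : ⋃ i, Ω i = univ) {f : ℕ → X → ℝ}
    (hf : ∀ k, Measurable (f k)) {L : Fin N → ℝ}
    (hL : ∀ i, Tendsto (fun k => eLpNorm (fun x => f k x - L i) p (μ.restrict (Ω i))) atTop (𝓝 0)) :
    ∃ w : X → ℝ, Measurable w ∧ (range w).Finite ∧
      Tendsto (fun k => eLpNorm (f k - w) p μ) atTop (𝓝 0) := by
  set D := disjointed Ω
  have hD (i : Fin N) : MeasurableSet (D i) := by
    rw [show D i = _ from disjointed_eq_inter_compl Ω i]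
    exact (hΩ i).inter (.iInter fun j => .iInter fun _ => (hΩ j).compl)
  have hmem (x : X) : ∃ j, x ∈ D j := by
    simp [← mem_iUnion, D, iUnion_disjointed, hcover]
  have hpiece (g : Fin N → X → ℝ) {j : Fin N} {x : X} (hx : x ∈ D j) :
      ∑ i, (D i).indicator (g i) x = g j x := by
    rw [Finset.sum_eq_single j (fun i _ hij => indicator_of_notMem
      ((disjoint_disjointed Ω hij).notMem_of_mem_right hx) _) (by simp), indicator_of_mem hx]
  set w : X → ℝ := fun x => ∑ i, (D i).indicator (fun _ => L i) x
  have hdiff (k : ℕ) : f k - w = ∑ i, (D i).indicator (fun x => f k x - L i) := by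
    ext x
    obtain ⟨j, hj⟩ := hmem x
    simp only [Pi.sub_apply, Finset.sum_apply, w, hpiece _ hj]
  have hbound (k : ℕ) : eLpNorm (f k - w) p μ ≤
      ∑ i, eLpNorm (fun x => f k x - L i) p (μ.restrict (Ω i)) := by
    rw [hdiff]
    refine (eLpNorm_sum_le (fun i _ => ((hf k).sub_const _).indicator (hD i)
      |>.aestronglyMeasurable) hp).trans (Finset.sum_le_sum fun i _ => ?_)
    rw [eLpNorm_indicator_eq_eLpNorm_restrict (hD i)]
    exact eLpNorm_mono_measure _ (Measure.restrict_mono (disjointed_subset Ω i) le_rfl)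
  refine ⟨w, Finset.measurable_sum _ fun i _ => measurable_const.indicator (hD i),
    (finite_range L).subset ?_, ?_⟩
  · rintro _ ⟨x, rfl⟩
    obtain ⟨j, hj⟩ := hmem x
    exact ⟨j, (hpiece (fun i _ => L i) hj).symm⟩
  · refine tendsto_of_tendsto_of_tendsto_of_le_of_le tendsto_const_nhds ?_ (fun _ => bot_le)
      hbound
    simpa using tendsto_finsetSum Finset.univ fun i _ => hL i

lemma exists_subseq_tendsto_eLpNorm_sub_of_tendsto_sub_const [IsFiniteMeasure μ] (hp : 1 ≤ p)
    (hp' : p ≠ ⊤) {N : ℕ} {Ω : Fin N → Set X} (hΩ : ∀ i, MeasurableSet (Ω i))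
    (hcover : ⋃ i, Ω i = univ) {f : ℕ → X → ℝ} (hf : ∀ k, Measurable (f k)) {C : ℝ≥0∞}
    (hC : C ≠ ⊤) (hbdd : ∀ k, eLpNorm (f k) p μ ≤ C) {a : ℕ → Fin N → ℝ}
    (ha : ∀ i, Tendsto (fun k => eLpNorm (fun x => f k x - a k i) p (μ.restrict (Ω i)))
      atTop (𝓝 0)) :
    ∃ (φ : ℕ → ℕ) (w : X → ℝ), StrictMono φ ∧ Measurable w ∧ (range w).Finite ∧
      Tendsto (fun k => eLpNorm (f (φ k) - w) p μ) atTop (𝓝 0) := by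
  obtain ⟨φ, L, hφ, hL⟩ := exists_subseq_tendsto_of_eventually_abs_le
    (S := {i | μ (Ω i) ≠ 0}) fun i hi =>
      exists_eventually_abs_le_of_tendsto_eLpNorm_sub (by simpa using hi) hp hp' hf hC
        (fun k => (eLpNorm_mono_measure _ Measure.restrict_le_self).trans (hbdd k)) (ha i)
  have hconv (i : Fin N) : Tendsto (fun k => eLpNorm (fun x => f (φ k) x - L i) p
      (μ.restrict (Ω i))) atTop (𝓝 0) := by
    by_cases hi : μ (Ω i) = 0
    · simp [Measure.restrict_eq_zero.2 hi]
    · exact tendsto_eLpNorm_sub_const hp hp' (fun k => hf (φ k))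
        ((ha i).comp hφ.tendsto_atTop) (hL i hi)
  obtain ⟨w, hw, hfin, hlim⟩ :=
    exists_finite_range_tendsto_eLpNorm_sub hp hΩ hcover (fun k => hf (φ k)) hconv
  exact ⟨φ, w, hφ, hw, hfin, hlim⟩

end LpConvergence

noncomputable section RandomWalk

variable {X : Type*} [MeasurableSpace X] {m : X → Measure X} {ν : Measure X}

lemma MeasurableKernel.measurable_lintegral (hker : MeasurableKernel m)
    (hprob : ∀ x, IsProbabilityMeasure (m x)) {f : X → X → ℝ≥0∞}
    (hf : Measurable (Function.uncurry f)) : Measurable fun x => ∫⁻ y, f x y ∂(m x) :=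
  let κ : Kernel X X := ⟨m, Measure.measurable_of_measurable_coe m hker⟩
  have : IsMarkovKernel κ := ⟨hprob⟩
  hf.lintegral_kernel_prod_right (κ := κ)

variable (m) in
def localEnergy (q : ℝ) (u : X → ℝ) (x : X) : ℝ≥0∞ :=
  ∫⁻ y, ENNReal.ofReal (|u y - u x| ^ q) ∂(m x)

variable (m ν) in
def rpowEnergy (q : ℝ) (u : X → ℝ) : ℝ≥0∞ :=
  ∫⁻ x, localEnergy m q u x ∂ν

lemma measurable_localEnergy (hker : MeasurableKernel m)
    (hprob : ∀ x, IsProbabilityMeasure (m x)) (q : ℝ) {u : X → ℝ} (hu : Measurable u) :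
    Measurable (localEnergy m q u) :=
  hker.measurable_lintegral hprob
    (((hu.comp measurable_snd).sub (hu.comp measurable_fst)).abs.pow_const q).ennreal_ofReal

lemma localEnergy_eq_lintegral_enorm_rpow {q : ℝ} (hq : 0 ≤ q) (u : X → ℝ) (x : X) :
    localEnergy m q u x = ∫⁻ y, ‖u y - u x‖ₑ ^ q ∂(m x) := by
  simp only [localEnergy, Real.enorm_eq_ofReal_abs,
    ENNReal.ofReal_rpow_of_nonneg (abs_nonneg _) hq]

lemma rpowEnergy_smul {q : ℝ} (hq : 0 ≤ q) (a : ℝ) (u : X → ℝ) :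
    rpowEnergy m ν q (a • u) = ‖a‖ₑ ^ q * rpowEnergy m ν q u := by
  have hne : ‖a‖ₑ ^ q ≠ ⊤ := ENNReal.rpow_ne_top_of_nonneg hq enorm_ne_top
  simp only [rpowEnergy, localEnergy, ← lintegral_const_mul' _ _ hne]
  refine lintegral_congr fun x => lintegral_congr fun y => ?_
  rw [Pi.smul_apply, Pi.smul_apply, smul_eq_mul, smul_eq_mul, ← mul_sub, abs_mul,
    Real.mul_rpow (abs_nonneg a) (abs_nonneg _), ENNReal.ofReal_mul (by positivity),
    Real.enorm_eq_ofReal_abs, ENNReal.ofReal_rpow_of_nonneg (abs_nonneg a) hq]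

lemma localEnergy_le_liminf {q : ℝ} (hq : 0 ≤ q) {g : ℕ → X → ℝ} {w : X → ℝ}
    (hg : ∀ k, Measurable (g k)) {x : X} (hx : Tendsto (fun k => g k x) atTop (𝓝 (w x)))
    (hlim : ∀ᵐ y ∂(m x), Tendsto (fun k => g k y) atTop (𝓝 (w y))) :
    localEnergy m q w x ≤ liminf (fun k => localEnergy m q (g k) x) atTop := by
  have hcont : Continuous fun t : ℝ => ENNReal.ofReal (|t| ^ q) :=
    ENNReal.continuous_ofReal.comp ((Real.continuous_rpow_const hq).comp continuous_abs)
  calc localEnergy m q w x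
      = ∫⁻ y, liminf (fun k => ENNReal.ofReal (|g k y - g k x| ^ q)) atTop ∂(m x) := by
        refine lintegral_congr_ae (hlim.mono fun y hy => ?_)
        exact ((hcont.tendsto _).comp (hy.sub hx)).liminf_eq.symm
    _ ≤ liminf (fun k => localEnergy m q (g k) x) atTop :=
        lintegral_liminf_le fun k => ((hg k).sub_const _).abs.pow_const q |>.ennreal_ofReal

lemma rpowEnergy_le_liminf (hker : MeasurableKernel m) (hprob : ∀ x, IsProbabilityMeasure (m x))
    (habs : ∀ x, m x ≪ ν) {q : ℝ} (hq : 0 ≤ q) {g : ℕ → X → ℝ} {w : X → ℝ}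
    (hg : ∀ k, Measurable (g k)) (hlim : ∀ᵐ x ∂ν, Tendsto (fun k => g k x) atTop (𝓝 (w x))) :
    rpowEnergy m ν q w ≤ liminf (fun k => rpowEnergy m ν q (g k)) atTop :=
  calc rpowEnergy m ν q w
      ≤ ∫⁻ x, liminf (fun k => localEnergy m q (g k) x) atTop ∂ν :=
        lintegral_mono_ae <| hlim.mono fun x hx =>
          localEnergy_le_liminf hq hg hx ((habs x).ae_le hlim)
    _ ≤ liminf (fun k => rpowEnergy m ν q (g k)) atTop :=
        lintegral_liminf_le fun k => measurable_localEnergy hker hprob q (hg k)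

lemma rpowEnergy_eq_zero_of_tendsto_eLpNorm (hker : MeasurableKernel m)
    (hprob : ∀ x, IsProbabilityMeasure (m x)) (habs : ∀ x, m x ≪ ν) {q : ℝ} (hq : 0 ≤ q)
    {P : ℝ≥0∞} (hP : P ≠ 0) {g : ℕ → X → ℝ} {w : X → ℝ} (hg : ∀ k, Measurable (g k))
    (hw : Measurable w) (hlim : Tendsto (fun k => eLpNorm (g k - w) P ν) atTop (𝓝 0))
    (hE : Tendsto (fun k => rpowEnergy m ν q (g k)) atTop (𝓝 0)) :
    rpowEnergy m ν q w = 0 := by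
  obtain ⟨ψ, hψ, hae⟩ := (tendstoInMeasure_of_tendsto_eLpNorm hP
    (fun k => (hg k).aestronglyMeasurable) hw.aestronglyMeasurable hlim).exists_seq_tendsto_ae
  refine le_antisymm ?_ bot_le
  calc rpowEnergy m ν q w ≤ liminf (fun k => rpowEnergy m ν q (g (ψ k))) atTop :=
        rpowEnergy_le_liminf hker hprob habs hq (fun k => hg _) hae
    _ = 0 := (hE.comp hψ.tendsto_atTop).liminf_eq

/-- Ergodicity only asks `m_x(B) = 1` for every `x ∈ B`; absolute continuity `m_x ≪ ν` lets us
discard the exceptional `ν`-null set. -/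
lemma ErgodicRW.measure_eq_zero_or_one (herg : ErgodicRW m ν) (hker : MeasurableKernel m)
    (hprob : ∀ x, IsProbabilityMeasure (m x)) (habs : ∀ x, m x ≪ ν) {D : Set X}
    (hD : MeasurableSet D) (hinv : ∀ᵐ x ∂ν, x ∈ D → m x Dᶜ = 0) : ν D = 0 ∨ ν D = 1 := by
  set B := D ∩ {x | m x D = 1}
  have hB : MeasurableSet B := hD.inter (hker D hD (measurableSet_singleton 1))
  have hDB : ν (D \ B) = 0 := by
    refine measure_mono_null (fun x hx => ?_) (ae_iff.1 hinv)
    exact fun h => hx.2 ⟨hx.1, (prob_compl_eq_zero_iff hD).1 (h hx.1)⟩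
  have hνB : ν B = ν D := measure_eq_measure_of_null_sdiff inter_subset_left hDB
  refine hνB ▸ herg B hB fun x hx => ?_
  rw [measure_eq_measure_of_null_sdiff inter_subset_left (habs x hDB)]
  exact hx.2

lemma ae_ae_eq_of_rpowEnergy_eq_zero (hker : MeasurableKernel m)
    (hprob : ∀ x, IsProbabilityMeasure (m x)) {q : ℝ} (hq : 0 < q) {w : X → ℝ}
    (hw : Measurable w) (hE : rpowEnergy m ν q w = 0) :
    ∀ᵐ x ∂ν, ∀ᵐ y ∂(m x), w y = w x := by
  filter_upwards [(lintegral_eq_zero_iff (measurable_localEnergy hker hprob q hw)).1 hE] with x hx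
  rw [Pi.zero_apply, localEnergy_eq_lintegral_enorm_rpow hq.le,
    lintegral_eq_zero_iff ((hw.sub_const _).enorm.pow_const q)] at hx
  filter_upwards [hx] with y hy
  simpa [ENNReal.rpow_eq_zero_iff, hq, hq.not_gt, sub_eq_zero] using hy

lemma ae_eq_integral_of_rpowEnergy_eq_zero [IsProbabilityMeasure ν] (herg : ErgodicRW m ν)
    (hker : MeasurableKernel m) (hprob : ∀ x, IsProbabilityMeasure (m x))
    (habs : ∀ x, m x ≪ ν) {q : ℝ} (hq : 0 < q) {w : X → ℝ} (hw : Measurable w)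
    (hfin : (range w).Finite) (hE : rpowEnergy m ν q w = 0) :
    ∀ᵐ x ∂ν, w x = ∫ y, w y ∂ν := by
  have hlevel (a : ℝ) : ν (w ⁻¹' {a}) = 0 ∨ ν (w ⁻¹' {a}) = 1 := by
    refine herg.measure_eq_zero_or_one hker hprob habs (hw (measurableSet_singleton a)) ?_
    filter_upwards [ae_ae_eq_of_rpowEnergy_eq_zero hker hprob hq hw hE] with x hx hxa
    refine measure_mono_null (fun y hy => ?_) (ae_iff.1 hx)
    exact fun h : w y = w x => hy (h.trans hxa)
  have hcover : ⋃ a ∈ range w, w ⁻¹' {a} = univ := by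
    simpa using (preimage_iUnion₂ (f := w) (s := fun a (_ : a ∈ range w) => {a})).symm
  obtain ⟨a, -, ha⟩ : ∃ a ∈ range w, ν (w ⁻¹' {a}) ≠ 0 := by
    by_contra! h
    have := (measure_biUnion_null_iff hfin.countable).2 h
    rw [hcover, measure_univ] at this
    exact one_ne_zero this
  have hwa : ∀ᵐ x ∂ν, w x = a := by
    refine ae_iff.2 ?_
    change ν (w ⁻¹' {a})ᶜ = 0
    rw [prob_compl_eq_zero_iff (hw (measurableSet_singleton a))]
    exact (hlevel a).resolve_left ha
  simpa [integral_congr_ae hwa] using hwa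

variable (m ν) in
/-- The common form to which (H1) and (H2) reduce. -/
def LocalPoincareCovers (p q : ℝ) : Prop :=
  ∀ B : Set X, MeasurableSet B → ν B = 0 →
    ∃ (N : ℕ) (xs : Fin N → X) (Ω : Fin N → Set X) (K : Fin N → ℝ≥0∞),
      (∀ i, xs i ∉ B) ∧ (∀ i, MeasurableSet (Ω i)) ∧ (⋃ i, Ω i) = univ ∧ (∀ i, K i ≠ ⊤) ∧
      ∀ v : X → ℝ, Measurable v → ∀ i,
        ∫⁻ x in Ω i, ‖v x - v (xs i)‖ₑ ^ p ∂ν ≤ K i * localEnergy m q v (xs i) ^ (p / q)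

lemma LocalPoincareCovers.exists_subseq_tendsto_eLpNorm_zero [IsProbabilityMeasure ν]
    {p q : ℝ} (hcov : LocalPoincareCovers m ν p q) (herg : ErgodicRW m ν)
    (hker : MeasurableKernel m) (hprob : ∀ x, IsProbabilityMeasure (m x)) (habs : ∀ x, m x ≪ ν)
    (hp : 1 ≤ p) (hq : 0 < q) {v : ℕ → X → ℝ} (hv : ∀ n, Measurable (v n))
    (hbdd : ∀ n, eLpNorm (v n) (ENNReal.ofReal p) ν ≤ 1)
    (hE : ∑' n, rpowEnergy m ν q (v n) ≠ ⊤)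
    (hint : Tendsto (fun n => ∫ x, v n x ∂ν) atTop (𝓝 0)) :
    ∃ φ : ℕ → ℕ, StrictMono φ ∧
      Tendsto (fun k => eLpNorm (v (φ k)) (ENNReal.ofReal p) ν) atTop (𝓝 0) := by
  set P := ENNReal.ofReal p
  have hp0 : 0 < p := zero_lt_one.trans_le hp
  have hP : 1 ≤ P := ENNReal.ofReal_one ▸ ENNReal.ofReal_le_ofReal hp
  have hF (n : ℕ) : Measurable (localEnergy m q (v n)) :=
    measurable_localEnergy hker hprob q (hv n)
  set B := {x | ∑' n, localEnergy m q (v n) x = ⊤}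
  have hB : MeasurableSet B := Measurable.tsum hF (measurableSet_singleton ⊤)
  have hB0 : ν B = 0 := measure_eq_top_of_lintegral_ne_top (Measurable.tsum hF).aemeasurable
    (by rwa [lintegral_tsum fun n => (hF n).aemeasurable])
  obtain ⟨N, xs, Ω, K, hxs, hΩ, hcover, hK, hest⟩ := hcov B hB hB0
  have hloc (i : Fin N) : Tendsto (fun n => eLpNorm (fun x => v n x - v n (xs i)) P
      (ν.restrict (Ω i))) atTop (𝓝 0) := by
    have hlim : Tendsto (fun n => (K i * localEnergy m q (v n) (xs i) ^ (p / q)) ^ (1 / p))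
        atTop (𝓝 0) := by
      have h := ENNReal.Tendsto.const_mul
        ((ENNReal.tendsto_atTop_zero_of_tsum_ne_top (hxs i)).ennrpow_const (p / q))
        (Or.inr (hK i)) |>.ennrpow_const (1 / p)
      rwa [ENNReal.zero_rpow_of_pos (by positivity), mul_zero,
        ENNReal.zero_rpow_of_pos (by positivity)] at h
    refine tendsto_of_tendsto_of_tendsto_of_le_of_le tendsto_const_nhds hlim (fun _ => bot_le)
      fun n => ?_
    rw [eLpNorm_ofReal_eq_lintegral_enorm_rpow _ hp0]
    exact ENNReal.rpow_le_rpow (hest (v n) (hv n) i) (by positivity)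
  obtain ⟨φ, w, hφ, hw, hfin, hlim⟩ := exists_subseq_tendsto_eLpNorm_sub_of_tendsto_sub_const hP
    ENNReal.ofReal_ne_top hΩ hcover hv ENNReal.one_ne_top hbdd hloc
  have hint_w : ∫ x, w x ∂ν = 0 := tendsto_nhds_unique
    (tendsto_integral_of_tendsto_eLpNorm hP (fun k =>
      ⟨(hv _).aestronglyMeasurable, (hbdd _).trans_lt ENNReal.one_lt_top⟩)
      hw.aestronglyMeasurable hlim)
    (hint.comp hφ.tendsto_atTop)
  have hEw : rpowEnergy m ν q w = 0 :=
    rpowEnergy_eq_zero_of_tendsto_eLpNorm hker hprob habs hq.le (by positivity)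
      (fun k => hv _) hw hlim
      ((ENNReal.tendsto_atTop_zero_of_tsum_ne_top hE).comp hφ.tendsto_atTop)
  have hw0 := ae_eq_integral_of_rpowEnergy_eq_zero herg hker hprob habs hq hw hfin hEw
  refine ⟨φ, hφ, hlim.congr fun k => eLpNorm_congr_ae ?_⟩
  filter_upwards [hw0] with x hx
  simp [hx, hint_w]

lemma exists_eLpNorm_eq_one_of_mul_lt {q : ℝ} (hq : 0 < q) {P : ℝ≥0∞} {u : X → ℝ}
    (hu : Measurable u) (hfin : eLpNorm u P ν ≠ ⊤) {C : ℝ≥0∞}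
    (hlt : C * (rpowEnergy m ν q u ^ (1 / q) + ENNReal.ofReal |∫ x, u x ∂ν|) < eLpNorm u P ν) :
    ∃ v : X → ℝ, Measurable v ∧ eLpNorm v P ν = 1 ∧
      C * (rpowEnergy m ν q v ^ (1 / q) + ENNReal.ofReal |∫ x, v x ∂ν|) < 1 := by
  set T := eLpNorm u P ν
  have hT : T ≠ 0 := (bot_le.trans_lt hlt).ne'
  have hnorm : ‖(T.toReal)⁻¹‖ₑ = T⁻¹ := by
    rw [enorm_inv (ENNReal.toReal_pos hT hfin).ne', Real.enorm_eq_ofReal ENNReal.toReal_nonneg,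
      ENNReal.ofReal_toReal hfin]
  refine ⟨(T.toReal)⁻¹ • u, hu.const_smul _, ?_, ?_⟩
  · rw [eLpNorm_const_smul, hnorm, ENNReal.inv_mul_cancel hT hfin]
  · have hscale : rpowEnergy m ν q ((T.toReal)⁻¹ • u) ^ (1 / q) +
        ENNReal.ofReal |∫ x, ((T.toReal)⁻¹ • u) x ∂ν| =
        T⁻¹ * (rpowEnergy m ν q u ^ (1 / q) + ENNReal.ofReal |∫ x, u x ∂ν|) := by
      rw [rpowEnergy_smul hq.le, ENNReal.mul_rpow_of_nonneg _ _ (by positivity),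
        ← ENNReal.rpow_mul, mul_one_div_cancel hq.ne', ENNReal.rpow_one, Pi.smul_def,
        integral_smul, ← Real.enorm_eq_ofReal_abs, ← Real.enorm_eq_ofReal_abs, enorm_smul,
        hnorm, mul_add]
    calc C * (rpowEnergy m ν q ((T.toReal)⁻¹ • u) ^ (1 / q) +
          ENNReal.ofReal |∫ x, ((T.toReal)⁻¹ • u) x ∂ν|)
        = C * (rpowEnergy m ν q u ^ (1 / q) + ENNReal.ofReal |∫ x, u x ∂ν|) * T⁻¹ := by
          rw [hscale]; ring
      _ < T * T⁻¹ := ENNReal.mul_lt_mul_left (ENNReal.inv_ne_zero.2 hfin)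
          (ENNReal.inv_ne_top.2 hT) hlt
      _ = 1 := ENNReal.mul_inv_cancel hT hfin

theorem LocalPoincareCovers.exists_poincare_const [IsProbabilityMeasure ν] {p q : ℝ}
    (hcov : LocalPoincareCovers m ν p q) (herg : ErgodicRW m ν) (hker : MeasurableKernel m)
    (hprob : ∀ x, IsProbabilityMeasure (m x)) (habs : ∀ x, m x ≪ ν) (hp : 1 ≤ p)
    (hpq : p ≤ q) :
    ∃ c : ℝ, 0 < c ∧ ∀ u : X → ℝ, Measurable u → MemLp u (ENNReal.ofReal q) ν →
      eLpNorm u (ENNReal.ofReal p) ν ≤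
        ENNReal.ofReal c * (rpowEnergy m ν q u ^ (1 / q) + ENNReal.ofReal |∫ x, u x ∂ν|) := by
  have hq : 1 ≤ q := hp.trans hpq
  have hq0 : 0 < q := zero_lt_one.trans_le hq
  by_contra! hcon
  have hseq (n : ℕ) : ∃ v : X → ℝ, Measurable v ∧ eLpNorm v (ENNReal.ofReal p) ν = 1 ∧
      2 ^ n * (rpowEnergy m ν q v ^ (1 / q) + ENNReal.ofReal |∫ x, v x ∂ν|) < 1 := by
    obtain ⟨u, hu, hmem, hlt⟩ := hcon (2 ^ n) (by positivity)
    refine exists_eLpNorm_eq_one_of_mul_lt hq0 hu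
      (hmem.mono_exponent (ENNReal.ofReal_le_ofReal hpq)).eLpNorm_ne_top ?_
    simpa [ENNReal.ofReal_pow] using hlt
  choose v hv hnorm hsmall using hseq
  have hsmall' (n : ℕ) :
      rpowEnergy m ν q (v n) ^ (1 / q) + ENNReal.ofReal |∫ x, v n x ∂ν| < 2⁻¹ ^ n := by
    rw [← ENNReal.inv_pow, ← one_div, ENNReal.lt_div_iff_mul_lt (.inl (by simp)) (.inl (by simp)),
      mul_comm]
    exact hsmall n
  have hE (n : ℕ) : rpowEnergy m ν q (v n) ≤ 2⁻¹ ^ n :=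
    calc rpowEnergy m ν q (v n) = (rpowEnergy m ν q (v n) ^ (1 / q)) ^ q := by
          rw [← ENNReal.rpow_mul, one_div_mul_cancel hq0.ne', ENNReal.rpow_one]
      _ ≤ (2⁻¹ ^ n) ^ q := ENNReal.rpow_le_rpow (le_self_add.trans (hsmall' n).le) hq0.le
      _ ≤ 2⁻¹ ^ n := ENNReal.rpow_le_self_of_le_one (pow_le_one₀ bot_le (by norm_num)) hq
  have hint (n : ℕ) : ‖∫ x, v n x ∂ν‖ ≤ 2⁻¹ ^ n := by
    simpa using (ENNReal.ofReal_le_iff_le_toReal (by simp)).1 (le_add_self.trans (hsmall' n).le)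
  obtain ⟨φ, -, hlim⟩ := hcov.exists_subseq_tendsto_eLpNorm_zero herg hker hprob habs hp hq0 hv
    (fun n => (hnorm n).le)
    (ne_top_of_le_ne_top (by simp [ENNReal.tsum_geometric]) (ENNReal.tsum_le_tsum hE))
    (squeeze_zero_norm hint (tendsto_pow_atTop_nhds_zero_of_lt_one (by norm_num) (by norm_num)))
  simp [hnorm] at hlim

lemma localPoincareCovers_of_le_rnDeriv [SigmaFinite ν] (hprob : ∀ x, IsProbabilityMeasure (m x))
    (habs : ∀ x, m x ≪ ν) {p : ℝ} (hp : 0 < p)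
    (H1 : ∀ B : Set X, MeasurableSet B → ν B = 0 →
      ∃ (N : ℕ) (xs : Fin N → X) (Ω : Fin N → Set X) (α : ℝ), 0 < α ∧
        (∀ i, xs i ∉ B) ∧ (∀ i, MeasurableSet (Ω i)) ∧ (⋃ i, Ω i) = univ ∧
        ∀ i, ∀ᵐ x ∂ν, x ∈ Ω i → ENNReal.ofReal α ≤ (m (xs i)).rnDeriv ν x) :
    LocalPoincareCovers m ν p p := by
  intro B hB hB0
  obtain ⟨N, xs, Ω, α, hα, hxs, hΩ, hcover, hdens⟩ := H1 B hB hB0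
  have hα0 : ENNReal.ofReal α ≠ 0 := by simpa using hα
  refine ⟨N, xs, Ω, fun _ => (ENNReal.ofReal α)⁻¹, hxs, hΩ, hcover,
    fun _ => ENNReal.inv_ne_top.2 hα0, fun v hv i => ?_⟩
  rw [div_self hp.ne', ENNReal.rpow_one, localEnergy_eq_lintegral_enorm_rpow hp.le]
  refine (ENNReal.mul_le_iff_le_inv hα0 ENNReal.ofReal_ne_top).1 ?_
  exact mul_setLIntegral_le_lintegral_of_le_rnDeriv (habs (xs i)) (hΩ i) (hdens i)
    ((hv.sub_const _).enorm.pow_const p)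

lemma localPoincareCovers_of_setLIntegral_rnDeriv_rpow_lt_top [SigmaFinite ν]
    (hprob : ∀ x, IsProbabilityMeasure (m x)) (habs : ∀ x, m x ≪ ν) {p q : ℝ} (hp : 0 < p)
    (hpq : p < q)
    (H2 : ∀ B : Set X, MeasurableSet B → ν B = 0 →
      ∃ (N : ℕ) (xs : Fin N → X) (Ω : Fin N → Set X),
        (∀ i, xs i ∉ B) ∧ (∀ i, MeasurableSet (Ω i)) ∧ (⋃ i, Ω i) = univ ∧
        ∀ i, ∫⁻ x in Ω i, ((m (xs i)).rnDeriv ν x) ^ (-(p / (q - p))) ∂ν < ⊤) :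
    LocalPoincareCovers m ν p q := by
  intro B hB hB0
  obtain ⟨N, xs, Ω, hxs, hΩ, hcover, hint⟩ := H2 B hB hB0
  have hs : -(p / (q - p)) < 0 := neg_neg_of_pos (div_pos hp (sub_pos.2 hpq))
  have h0 (i : Fin N) : ∀ᵐ x ∂ν, x ∈ Ω i → (m (xs i)).rnDeriv ν x ≠ 0 := by
    have hfin := ae_lt_top (((m (xs i)).measurable_rnDeriv ν).pow_const _) (hint i).ne
    filter_upwards [(ae_restrict_iff' (hΩ i)).1 hfin] with x hx hxΩ hzero
    simpa [hzero, ENNReal.zero_rpow_of_neg hs] using hx hxΩ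
  refine ⟨N, xs, Ω, fun i => (∫⁻ x in Ω i, ((m (xs i)).rnDeriv ν x) ^ (-(p / (q - p))) ∂ν) ^
    ((q - p) / q), hxs, hΩ, hcover,
    fun i => ENNReal.rpow_ne_top_of_nonneg (div_nonneg (sub_nonneg.2 hpq.le) (hp.trans hpq).le)
      (hint i).ne, fun v hv i => ?_⟩
  rw [localEnergy_eq_lintegral_enorm_rpow (hp.trans hpq).le, mul_comm]
  exact setLIntegral_rpow_le_lintegral_rpow_mul_rnDeriv (habs (xs i)) (hΩ i) hp hpq (h0 i)
    (hv.sub_const _).enorm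

end RandomWalk

theorem poincare_inequalities_general
    {X : Type*} [MeasurableSpace X]
    (m : X → Measure X) (hprob : ∀ x, IsProbabilityMeasure (m x))
    (hker : MeasurableKernel m)
    (ν : Measure X) [IsProbabilityMeasure ν]
    (herg : ErgodicRW m ν) (habs : ∀ x, m x ≪ ν) :
    ((∀ B : Set X, MeasurableSet B → ν B = 0 →
        ∃ (N : ℕ) (xs : Fin N → X) (Ω : Fin N → Set X) (α : ℝ), 0 < α ∧
          (∀ i, xs i ∉ B) ∧ (∀ i, MeasurableSet (Ω i)) ∧ (⋃ i, Ω i) = Set.univ ∧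
          ∀ i, ∀ᵐ x ∂ν, x ∈ Ω i → ENNReal.ofReal α ≤ (m (xs i)).rnDeriv ν x) →
      ∀ p : ℝ, 1 ≤ p → ∃ c : ℝ, 0 < c ∧
        ∀ u : X → ℝ, Measurable u → MemLp u (ENNReal.ofReal p) ν →
          eLpNorm u (ENNReal.ofReal p) ν ≤
            ENNReal.ofReal c *
              ((∫⁻ x, ∫⁻ y, ENNReal.ofReal (|u y - u x| ^ p) ∂(m x) ∂ν) ^ (1 / p) +
                ENNReal.ofReal |∫ x, u x ∂ν|)) ∧
    (∀ p q : ℝ, 1 ≤ p → p < q →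
      (∀ B : Set X, MeasurableSet B → ν B = 0 →
        ∃ (N : ℕ) (xs : Fin N → X) (Ω : Fin N → Set X),
          (∀ i, xs i ∉ B) ∧ (∀ i, MeasurableSet (Ω i)) ∧ (⋃ i, Ω i) = Set.univ ∧
          ∀ i, ∫⁻ x in Ω i, ((m (xs i)).rnDeriv ν x) ^ (-(p / (q - p))) ∂ν < ⊤) →
      ∃ c : ℝ, 0 < c ∧
        ∀ u : X → ℝ, Measurable u → MemLp u (ENNReal.ofReal q) ν →
          eLpNorm u (ENNReal.ofReal p) ν ≤
            ENNReal.ofReal c *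
              ((∫⁻ x, ∫⁻ y, ENNReal.ofReal (|u y - u x| ^ q) ∂(m x) ∂ν) ^ (1 / q) +
                ENNReal.ofReal |∫ x, u x ∂ν|)) := by
  refine ⟨fun H1 p hp => ?_, fun p q hp hpq H2 => ?_⟩
  · exact (localPoincareCovers_of_le_rnDeriv hprob habs (by linarith) H1).exists_poincare_const
      herg hker hprob habs hp le_rfl
  · exact (localPoincareCovers_of_setLIntegral_rnDeriv_rpow_lt_top hprob habs (by linarith) hpq
      H2).exists_poincare_const herg hker hprob habs hp hpq.le

/-- Poincaré-type inequalities. Under hypothesis (H1), a `(p,p)`-Poincaré inequality holds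
for every `p ≥ 1`; under hypothesis (H2) (for `1 ≤ p < q`), a `(q,p)`-Poincaré inequality
holds. -/
theorem poincare_inequalities
    {X : Type*} [MetricSpace X] [PolishSpace X] [MeasurableSpace X] [BorelSpace X]
    (m : X → Measure X) (hprob : ∀ x, IsProbabilityMeasure (m x))
    (hker : MeasurableKernel m)
    (ν : Measure X) [IsProbabilityMeasure ν] (hrev : Reversible m ν)
    (herg : ErgodicRW m ν) (habs : ∀ x, m x ≪ ν) :
    ((∀ B : Set X, MeasurableSet B → ν B = 0 →
        ∃ (N : ℕ) (xs : Fin N → X) (Ω : Fin N → Set X) (α : ℝ), 0 < α ∧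
          (∀ i, xs i ∉ B) ∧ (∀ i, MeasurableSet (Ω i)) ∧ (⋃ i, Ω i) = Set.univ ∧
          ∀ i, ∀ᵐ x ∂ν, x ∈ Ω i → ENNReal.ofReal α ≤ (m (xs i)).rnDeriv ν x) →
      ∀ p : ℝ, 1 ≤ p → ∃ c : ℝ, 0 < c ∧
        ∀ u : X → ℝ, Measurable u → MemLp u (ENNReal.ofReal p) ν →
          eLpNorm u (ENNReal.ofReal p) ν ≤
            ENNReal.ofReal c *
              ((∫⁻ x, ∫⁻ y, ENNReal.ofReal (|u y - u x| ^ p) ∂(m x) ∂ν) ^ (1 / p) +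
                ENNReal.ofReal |∫ x, u x ∂ν|)) ∧
    (∀ p q : ℝ, 1 ≤ p → p < q →
      (∀ B : Set X, MeasurableSet B → ν B = 0 →
        ∃ (N : ℕ) (xs : Fin N → X) (Ω : Fin N → Set X),
          (∀ i, xs i ∉ B) ∧ (∀ i, MeasurableSet (Ω i)) ∧ (⋃ i, Ω i) = Set.univ ∧
          ∀ i, ∫⁻ x in Ω i, ((m (xs i)).rnDeriv ν x) ^ (-(p / (q - p))) ∂ν < ⊤) →
      ∃ c : ℝ, 0 < c ∧
        ∀ u : X → ℝ, Measurable u → MemLp u (ENNReal.ofReal q) ν →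
          eLpNorm u (ENNReal.ofReal p) ν ≤
            ENNReal.ofReal c *
              ((∫⁻ x, ∫⁻ y, ENNReal.ofReal (|u y - u x| ^ q) ∂(m x) ∂ν) ^ (1 / q) +
                ENNReal.ofReal |∫ x, u x ∂ν|)) :=
  poincare_inequalities_general m hprob hker ν herg habs
end

section
/- Let [X,d,m] be an m-connected metric random walk space with an invariant and reversible σ-finite measure ν, and let Ω ⊂ X be ν-measurable with 0 < ν(Ω) < ν(X) and ν(Ω) < ∞. Then h₁^m(Ω) = Λ₁^m(Ω), where Λ₁^m(Ω) := inf{ TV_m(u) : u ∈ L¹(X,ν), u = 0 ν-a.e. on X∖Ω, u ≥ 0 ν-a.e., ∫_X u dν = 1 }. -/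
open MeasureTheory ENNReal Filter Set Topology

/-!
By reversibility, `TV_m(v) = ∫ P_m({v > t}) dt` for every measurable `v` (coarea formula):
`|v(y) - v(x)|` is the length of the set of levels `t` separating `v(x)` from `v(y)`, and the
pairs separated by the level `t` form `(E × Eᶜ) ∪ (Eᶜ × E)` with `E = {v > t}`, whose
`ν ⊗ m_x`-measure is `L_m(E, Eᶜ) + L_m(Eᶜ, E) = 2 P_m(E)`. For an admissible `u` the sets
`{u > t}`, `t > 0`, lie in `Ω`, so `P_m({u > t}) ≥ h₁^m(Ω) ν({u > t})`, and the layer-cake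
formula `∫₀^∞ ν({u > t}) dt = ∫ u dν = 1` gives `TV_m(u) ≥ h₁^m(Ω)`. Conversely `χ_E / ν(E)` is
admissible with total variation `P_m(E) / ν(E)`.
-/

open ProbabilityTheory
open scoped symmDiff

theorem Real.volume_Iio_symmDiff_Iio (a b : ℝ) :
    volume (Iio a ∆ Iio b) = ENNReal.ofReal |b - a| := by
  have h : Iio a ∆ Iio b = Ico (min a b) (max a b) := by
    ext t
    simp only [mem_symmDiff, mem_Iio, mem_Ico, min_le_iff, lt_max_iff, not_lt]
    grind
  rw [h, Real.volume_Ico, max_sub_min_eq_abs]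

section

variable {X : Type*} [MeasurableSpace X] {m : X → Measure X} {ν : Measure X}

theorem Reversible.Lm_comm (hrev : Reversible m ν) {A B : Set X} (hA : MeasurableSet A)
    (hB : MeasurableSet B) : Lm m ν A B = Lm m ν B A := by
  have slice : ∀ {S T : Set X}, MeasurableSet T → ∀ x,
      ∫⁻ y, S.indicator 1 x * T.indicator 1 y ∂(m x) = S.indicator (fun x => m x T) x := by
    intro S T hT x
    by_cases hx : x ∈ S <;> simp [hx, lintegral_indicator_one hT]
  have h := hrev (fun x y => A.indicator 1 x * B.indicator 1 y)
    (((measurable_const.indicator hA).comp measurable_fst).mul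
      ((measurable_const.indicator hB).comp measurable_snd))
  simp_rw [slice hB, mul_comm (A.indicator 1 _), slice hA, lintegral_indicator hA,
    lintegral_indicator hB] at h
  exact h

theorem Reversible.ae_eq_zero_of_null (hrev : Reversible m ν) (hker : MeasurableKernel m)
    {N : Set X} (hN : MeasurableSet N) (hN0 : ν N = 0) : ∀ᵐ x ∂ν, m x N = 0 := by
  have h : Lm m ν univ N = 0 := by
    rw [hrev.Lm_comm MeasurableSet.univ hN, Lm, Measure.restrict_eq_zero.mpr hN0,
      lintegral_zero_measure]
  rw [Lm, Measure.restrict_univ, lintegral_eq_zero_iff (hker N hN)] at h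
  exact h

theorem Reversible.nlEnergy_congr (hrev : Reversible m ν) (hker : MeasurableKernel m)
    {u v : X → ℝ} (hu : Measurable u) (hv : Measurable v) (huv : u =ᵐ[ν] v) :
    nlEnergy m ν u = nlEnergy m ν v := by
  have hnull := hrev.ae_eq_zero_of_null hker (measurableSet_eq_fun hu hv).compl huv
  refine lintegral_congr_ae ?_
  filter_upwards [hnull, huv] with x hx hux
  refine lintegral_congr_ae ?_
  filter_upwards [measure_eq_zero_iff_ae_notMem.mp hx] with y hy
  rw [not_not.mp hy, hux]

def MeasurableKernel.toKernel (hker : MeasurableKernel m) : Kernel X X :=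
  ⟨m, Measure.measurable_of_measurable_coe m hker⟩

theorem MeasurableKernel.isMarkovKernel_toKernel (hker : MeasurableKernel m)
    (hprob : ∀ x, IsProbabilityMeasure (m x)) : IsMarkovKernel hker.toKernel :=
  ⟨hprob⟩

theorem Reversible.nlEnergy_eq_lintegral_Pm (hrev : Reversible m ν) (hker : MeasurableKernel m)
    (hprob : ∀ x, IsProbabilityMeasure (m x)) [SFinite ν] {v : X → ℝ} (hv : Measurable v) :
    nlEnergy m ν v = 2 * ∫⁻ t, Pm m ν {x | t < v x} := by
  have := hker.isMarkovKernel_toKernel hprob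
  set π := ν ⊗ₘ hker.toKernel
  set T : Set ((X × X) × ℝ) := {q | q.2 < v q.1.1} ∆ {q | q.2 < v q.1.2}
  have hT : MeasurableSet T :=
    (measurableSet_lt measurable_snd (hv.comp (measurable_fst.comp measurable_fst))).symmDiff
      (measurableSet_lt measurable_snd (hv.comp (measurable_snd.comp measurable_fst)))
  have slice_pair : ∀ p : X × X, volume (Prod.mk p ⁻¹' T) = ENNReal.ofReal |v p.2 - v p.1| :=
    fun p => Real.volume_Iio_symmDiff_Iio (v p.1) (v p.2)
  have slice_level : ∀ t : ℝ, π ((fun p => (p, t)) ⁻¹' T) = 2 * Pm m ν {x | t < v x} := by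
    intro t
    have hE : MeasurableSet {x | t < v x} := measurableSet_lt measurable_const hv
    set E := {x | t < v x}
    have hpre : (fun p => (p, t)) ⁻¹' T = E ×ˢ Eᶜ ∪ Eᶜ ×ˢ E := by
      ext p
      simp only [T, E, preimage_symmDiff, mem_symmDiff, mem_preimage, mem_ofPred_eq, mem_union,
        mem_prod, mem_compl_iff]
      tauto
    rw [hpre, measure_union (disjoint_prod.mpr (Or.inl disjoint_compl_right)) (hE.compl.prod hE),
      Measure.compProd_apply_prod hE hE.compl, Measure.compProd_apply_prod hE.compl hE]
    change Lm m ν E Eᶜ + Lm m ν Eᶜ E = 2 * Lm m ν E Eᶜ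
    rw [hrev.Lm_comm hE.compl hE, two_mul]
  calc nlEnergy m ν v = ∫⁻ p, volume (Prod.mk p ⁻¹' T) ∂π := by
        simp_rw [slice_pair]
        rw [Measure.lintegral_compProd (by fun_prop)]
        rfl
    _ = (π.prod volume) T := (Measure.prod_apply hT).symm
    _ = ∫⁻ t, π ((fun p => (p, t)) ⁻¹' T) := Measure.prod_apply_symm hT
    _ = 2 * ∫⁻ t, Pm m ν {x | t < v x} := by
        simp_rw [slice_level]
        exact lintegral_const_mul' _ _ ofNat_ne_top

theorem Reversible.TVm_eq_lintegral_Pm (hrev : Reversible m ν) (hker : MeasurableKernel m)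
    (hprob : ∀ x, IsProbabilityMeasure (m x)) [SFinite ν] {v : X → ℝ} (hv : Measurable v) :
    TVm m ν v = ∫⁻ t, Pm m ν {x | t < v x} := by
  rw [TVm, hrev.nlEnergy_eq_lintegral_Pm hker hprob hv, ← mul_assoc,
    ENNReal.inv_mul_cancel two_ne_zero ofNat_ne_top, one_mul]

theorem Reversible.TVm_indicator_const (hrev : Reversible m ν) (hker : MeasurableKernel m)
    (hprob : ∀ x, IsProbabilityMeasure (m x)) [SFinite ν] {E : Set X} (hE : MeasurableSet E)
    {c : ℝ} (hc : 0 ≤ c) : TVm m ν (E.indicator fun _ => c) = ENNReal.ofReal c * Pm m ν E := by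
  have level : ∀ t, Pm m ν {x | t < E.indicator (fun _ => c) x} =
      (Ico 0 c).indicator (fun _ => Pm m ν E) t := by
    intro t
    by_cases ht0 : t < 0
    · have : {x | t < E.indicator (fun _ => c) x} = univ :=
        eq_univ_of_forall fun x => ht0.trans_le (indicator_nonneg (fun _ _ => hc) x)
      simp [this, ht0.not_ge, Pm, Lm]
    by_cases htc : t < c
    · have : {x | t < E.indicator (fun _ => c) x} = E := by
        ext x
        by_cases hx : x ∈ E <;> simp [hx, htc, ht0]
      simp [this, htc, not_lt.mp ht0]
    · have : {x | t < E.indicator (fun _ => c) x} = ∅ := by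
        ext x
        by_cases hx : x ∈ E <;> simp [hx, htc, ht0]
      simp [this, htc, Pm, Lm]
  rw [hrev.TVm_eq_lintegral_Pm hker hprob (measurable_const.indicator hE)]
  simp_rw [level]
  rw [lintegral_indicator_const measurableSet_Ico, Real.volume_Ico, sub_zero, mul_comm]

theorem h1m_mul_le_Pm {Ω E : Set X} (hE : MeasurableSet E) (hEΩ : E ⊆ Ω) (hfin : ν E ≠ ⊤) :
    h1m m ν Ω * ν E ≤ Pm m ν E := by
  rcases eq_or_ne (ν E) 0 with h0 | h0
  · simp [h0]
  calc h1m m ν Ω * ν E ≤ Pm m ν E / ν E * ν E := by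
        gcongr
        exact sInf_le ⟨E, hE, hEΩ, pos_iff_ne_zero.mpr h0, rfl⟩
    _ = Pm m ν E := ENNReal.div_mul_cancel h0 hfin

theorem Reversible.h1m_mul_integral_le_TVm (hrev : Reversible m ν) (hker : MeasurableKernel m)
    (hprob : ∀ x, IsProbabilityMeasure (m x)) [SFinite ν] {Ω : Set X} (hΩ : MeasurableSet Ω)
    {u : X → ℝ} (hu : Measurable u) (hui : Integrable u ν) (hsupp : ∀ᵐ x ∂ν, x ∉ Ω → u x = 0)
    (hnn : ∀ᵐ x ∂ν, 0 ≤ u x) : h1m m ν Ω * ENNReal.ofReal (∫ x, u x ∂ν) ≤ TVm m ν u := by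
  set v := Ω.indicator u
  have hv : Measurable v := hu.indicator hΩ
  have huv : u =ᵐ[ν] v := by
    filter_upwards [hsupp] with x hx
    by_cases h : x ∈ Ω <;> simp [v, h, hx]
  have hv_nn : 0 ≤ᵐ[ν] v := by
    filter_upwards [hnn, huv] with x hx hxv
    exact hxv ▸ hx
  have hvi : Integrable v ν := hui.congr huv
  have level_subset : ∀ t, 0 < t → {x | t < v x} ⊆ Ω := fun t ht x hx => by
    by_contra h
    simp only [v, mem_ofPred_eq, indicator_of_notMem h] at hx
    exact ht.not_gt hx
  calc h1m m ν Ω * ENNReal.ofReal (∫ x, u x ∂ν)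
      = h1m m ν Ω * ∫⁻ t in Ioi 0, ν {x | t < v x} := by
        rw [integral_congr_ae huv, ofReal_integral_eq_lintegral_ofReal hvi hv_nn,
          lintegral_eq_lintegral_meas_lt ν hv_nn hv.aemeasurable]
    _ ≤ ∫⁻ t in Ioi 0, h1m m ν Ω * ν {x | t < v x} := lintegral_const_mul_le _ _
    _ ≤ ∫⁻ t in Ioi 0, Pm m ν {x | t < v x} :=
        setLIntegral_mono' measurableSet_Ioi fun t ht =>
          h1m_mul_le_Pm (measurableSet_lt measurable_const hv) (level_subset t ht)
            (hvi.measure_gt_lt_top ht).ne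
    _ ≤ ∫⁻ t, Pm m ν {x | t < v x} := setLIntegral_le_lintegral _ _
    _ = TVm m ν u := by
        rw [← hrev.TVm_eq_lintegral_Pm hker hprob hv, TVm, TVm, hrev.nlEnergy_congr hker hu hv huv]

end

theorem h1m_eq_Lambda1m_general
    {X : Type*} [MeasurableSpace X]
    (m : X → Measure X) (hprob : ∀ x, IsProbabilityMeasure (m x))
    (hker : MeasurableKernel m)
    (ν : Measure X) [SigmaFinite ν] (hrev : Reversible m ν)
    (Ω : Set X) (hΩ : MeasurableSet Ω)
    (h2 : ν Ω < ⊤) :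
    h1m m ν Ω =
      sInf {r : ℝ≥0∞ | ∃ u : X → ℝ, Measurable u ∧ Integrable u ν ∧
        (∀ᵐ x ∂ν, x ∉ Ω → u x = 0) ∧ (∀ᵐ x ∂ν, 0 ≤ u x) ∧
        (∫ x, u x ∂ν) = 1 ∧ r = TVm m ν u} := by
  refine le_antisymm (le_sInf ?_) (le_sInf ?_)
  · rintro r ⟨u, hu, hui, hsupp, hnn, hint, rfl⟩
    simpa [hint] using hrev.h1m_mul_integral_le_TVm hker hprob hΩ hu hui hsupp hnn
  · rintro r ⟨E, hE, hEΩ, hE0, rfl⟩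
    have hEfin : ν E ≠ ⊤ := ((measure_mono hEΩ).trans_lt h2).ne
    have hc : 0 < (ν E).toReal := ENNReal.toReal_pos hE0.ne' hEfin
    refine sInf_le ⟨E.indicator fun _ => (ν E).toReal⁻¹, measurable_const.indicator hE,
      (integrable_indicator_iff hE).mpr (integrableOn_const hEfin),
      ae_of_all _ fun x hx => indicator_of_notMem (fun h => hx (hEΩ h)) _,
      ae_of_all _ (indicator_nonneg fun _ _ => by positivity), ?_, ?_⟩
    · rw [integral_indicator_const _ hE, smul_eq_mul, measureReal_def, mul_inv_cancel₀ hc.ne']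
    · rw [hrev.TVm_indicator_const hker hprob hE (by positivity), ENNReal.ofReal_inv_of_pos hc,
        ofReal_toReal hEfin, ENNReal.div_eq_inv_mul]

/-- The `m`-Cheeger constant of `Ω` coincides with the variational constant `Λ₁^m(Ω)`:
`h₁^m(Ω) = inf { TV_m(u) : u ∈ L¹(X,ν), u = 0 a.e. on X∖Ω, u ≥ 0 a.e., ∫ u dν = 1 }`. -/
theorem h1m_eq_Lambda1m
    {X : Type*} [MetricSpace X] [PolishSpace X] [MeasurableSpace X] [BorelSpace X]
    (m : X → Measure X) (hprob : ∀ x, IsProbabilityMeasure (m x))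
    (hker : MeasurableKernel m)
    (ν : Measure X) [SigmaFinite ν] (hrev : Reversible m ν)
    (hconn : MConnected m ν)
    (Ω : Set X) (hΩ : MeasurableSet Ω)
    (h0 : 0 < ν Ω) (h1 : ν Ω < ν Set.univ) (h2 : ν Ω < ⊤) :
    h1m m ν Ω =
      sInf {r : ℝ≥0∞ | ∃ u : X → ℝ, Measurable u ∧ Integrable u ν ∧
        (∀ᵐ x ∂ν, x ∉ Ω → u x = 0) ∧ (∀ᵐ x ∂ν, 0 ≤ u x) ∧
        (∫ x, u x ∂ν) = 1 ∧ r = TVm m ν u} :=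
  h1m_eq_Lambda1m_general m hprob hker ν hrev Ω hΩ h2
end
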